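/- Let R > 0 and κ > 0, and write P(x) = I_0(x) K_0(x). Then ∫_0^R r I_0(κ r)² dr + (I_0(κR)/K_0(κR))² ∫_R^∞ r K_0(κ r)² dr = − (R / (2 κ K_0(κR)²)) P'(κR). In particular the squared L² norm over ℝ² of the radial function equal to I_0(κ r)/√(2π) for r < R and to (I_0(κR)/K_0(κR)) K_0(κ r)/√(2π) for r > R equals − (R / (2 κ K_0(κR)²)) P'(κR) multiplied by 2π·(1/(2π)) = 1 times that quantity. -/

import Mathlib

open MeasureTheory Real Filter Asymptotics Topology

/-- Modified Bessel function of the first kind of integer order `m`. -/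
noncomputable def besselI (m : ℤ) (x : ℝ) : ℝ :=
  (1 / Real.pi) * ∫ θ in (0:ℝ)..Real.pi, Real.exp (x * Real.cos θ) * Real.cos ((m : ℝ) * θ)

/-- Modified Bessel function of the second kind of integer order `m`. -/
noncomputable def besselK (m : ℤ) (x : ℝ) : ℝ :=
  ∫ t in Set.Ioi (0:ℝ), Real.exp (-x * Real.cosh t) * Real.cosh ((m : ℝ) * t)

/-- `ξ_{m,α,d}(κ) = α R_d I_m(κ R_d) K_m(κ R_d) − 1` with `R_d = R + d`. -/
noncomputable def xiA (m : ℤ) (α R d κ : ℝ) : ℝ :=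
  α * (R + d) * (besselI m (κ * (R + d)) * besselK m (κ * (R + d))) - 1

/-- `ξ_{m,β}(κ) = β R I_m(κ R) K_m(κ R) − 1`. -/
noncomputable def xiB (m : ℤ) (β R κ : ℝ) : ℝ :=
  β * R * (besselI m (κ * R) * besselK m (κ * R)) - 1

/-- `ν_m(κ, d) = α β R_d R K_m(κ R_d)² I_m(κ R)²` with `R_d = R + d`. -/
noncomputable def nu (m : ℤ) (α β R κ d : ℝ) : ℝ :=
  α * β * (R + d) * R * (besselK m (κ * (R + d)))^2 * (besselI m (κ * R))^2

/-- `η_m(κ, d) = ν_m(κ, d) − ξ_{m,α,d}(κ) ξ_{m,β}(κ)`. -/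
noncomputable def eta (m : ℤ) (α β R κ d : ℝ) : ℝ :=
  nu m α β R κ d - xiA m α R d κ * xiB m β R κ

/-!
Both radial integrals have closed-form antiderivatives. From `I₀' = I₁`, `I₁' = I₀ - I₁ / x`,
`K₀' = -K₁` and `K₁' = -K₀ - K₁ / x` (differentiation under the integral sign plus one integration
by parts each), `r ↦ r² / 2 (I₀(κr)² - I₁(κr)²)` is a primitive of `r I₀(κr)²` and
`r ↦ r² / 2 (K₀(κr)² - K₁(κr)²)` one of `r K₀(κr)²`; the latter vanishes at infinity because
`e^{-x} ≤ x K₁(x) ≤ (1 + x) e^{-x}`. What remains is the Wronskian identity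
`x (I₀ K₁ + I₁ K₀)(x) = 1`: its left side has derivative zero and tends to `1` as `x → 0⁺`, by the
same bounds on `x K₁(x)`. In polar coordinates the planar integral is `2π` times the radial one.
-/

open Set

section BesselK

variable {g : ℝ → ℝ} {k : ℕ} {x : ℝ}

lemma self_le_cosh {t : ℝ} (ht : 0 ≤ t) : t ≤ cosh t :=
  (self_le_sinh_iff.2 ht).trans (sinh_lt_cosh t).le

lemma cosh_pow_mul_exp_neg_mul_cosh_le (hx : 0 < x) {t : ℝ} (ht : 0 ≤ t) (k : ℕ) :
    cosh t ^ k * exp (-x * cosh t) ≤ k.factorial * (2 / x) ^ k * exp (-(x / 2) * t) := by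
  -- half of the decay of `exp (-x cosh t)` absorbs `cosh t ^ k`, via `y ^ k / k! ≤ exp y`
  have hpow : cosh t ^ k ≤ k.factorial * (2 / x) ^ k * exp (x / 2 * cosh t) := by
    have h := pow_div_factorial_le_exp (x / 2 * cosh t) (by positivity) k
    rw [div_le_iff₀ (by positivity), mul_pow] at h
    calc cosh t ^ k = (2 / x) ^ k * ((x / 2) ^ k * cosh t ^ k) := by
          rw [← mul_assoc, ← mul_pow, div_mul_div_comm, mul_comm (2:ℝ), div_self (by positivity),
            one_pow, one_mul]
      _ ≤ (2 / x) ^ k * (exp (x / 2 * cosh t) * k.factorial) := by gcongr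
      _ = _ := by ring
  calc cosh t ^ k * exp (-x * cosh t)
      ≤ k.factorial * (2 / x) ^ k * exp (x / 2 * cosh t) * exp (-x * cosh t) := by gcongr
    _ = k.factorial * (2 / x) ^ k * exp (-(x / 2) * cosh t) := by
        rw [mul_assoc, ← exp_add]; ring_nf
    _ ≤ k.factorial * (2 / x) ^ k * exp (-(x / 2) * t) := by
        gcongr _ * exp ?_
        nlinarith [self_le_cosh ht]

lemma integrableOn_exp_neg_mul_cosh_mul (hg : Continuous g)
    (hg_le : ∀ t, 0 ≤ t → |g t| ≤ cosh t ^ k) (hx : 0 < x) :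
    IntegrableOn (fun t => exp (-x * cosh t) * g t) (Ioi 0) := by
  refine Integrable.mono'
    ((exp_neg_integrableOn_Ioi 0 (half_pos hx)).const_mul (k.factorial * (2 / x) ^ k))
    (by fun_prop : Continuous fun t => exp (-x * cosh t) * g t).aestronglyMeasurable ?_
  filter_upwards [ae_restrict_mem measurableSet_Ioi] with t ht
  rw [norm_mul, norm_of_nonneg (exp_pos _).le, norm_eq_abs]
  calc exp (-x * cosh t) * |g t| ≤ exp (-x * cosh t) * cosh t ^ k := by
        gcongr; exact hg_le t (le_of_lt ht)
    _ ≤ _ := by rw [mul_comm]; exact cosh_pow_mul_exp_neg_mul_cosh_le hx (le_of_lt ht) k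

lemma hasDerivAt_integral_exp_neg_mul_cosh_mul (hg : Continuous g)
    (hg_le : ∀ t, 0 ≤ t → |g t| ≤ cosh t ^ k) (hx : 0 < x) :
    HasDerivAt (fun y => ∫ t in Ioi 0, exp (-y * cosh t) * g t)
      (-∫ t in Ioi 0, exp (-x * cosh t) * (cosh t * g t)) x := by
  have hcosh_le : ∀ t, 0 ≤ t → |cosh t * g t| ≤ cosh t ^ (k + 1) := fun t ht => by
    rw [abs_mul, abs_of_pos (cosh_pos t), pow_succ']
    exact mul_le_mul_of_nonneg_left (hg_le t ht) (cosh_pos t).le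
  have key := hasDerivAt_integral_of_dominated_loc_of_deriv_le (μ := volume.restrict (Ioi 0))
    (F := fun y t => exp (-y * cosh t) * g t)
    (F' := fun y t => -(exp (-y * cosh t) * (cosh t * g t)))
    (bound := fun t => exp (-(x / 2) * cosh t) * cosh t ^ (k + 1))
    (Metric.ball_mem_nhds x (half_pos hx))
    (.of_forall fun y =>
      (by fun_prop : Continuous fun t => exp (-y * cosh t) * g t).aestronglyMeasurable)
    (integrableOn_exp_neg_mul_cosh_mul hg hg_le hx)
    (by fun_prop : Continuous fun t => -(exp (-x * cosh t) * (cosh t * g t))).aestronglyMeasurable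
    ?_
    (integrableOn_exp_neg_mul_cosh_mul (continuous_cosh.pow _)
      (fun t _ => (abs_of_pos (pow_pos (cosh_pos t) _)).le) (half_pos hx))
    (.of_forall fun t y _ =>
      (((hasDerivAt_neg y).mul_const (cosh t)).exp.mul_const (g t)).congr_deriv (by ring))
  · rw [integral_neg] at key
    exact key.2
  filter_upwards [ae_restrict_mem measurableSet_Ioi] with t ht y hy
  have hxy : x / 2 < y := by
    rw [Metric.mem_ball, dist_eq, abs_lt] at hy; linarith
  rw [norm_neg, norm_mul, norm_of_nonneg (exp_pos _).le, norm_eq_abs]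
  gcongr
  exact hcosh_le t (le_of_lt ht)

lemma tendsto_exp_neg_mul_cosh_mul_atTop (hg_le : ∀ t, 0 ≤ t → |g t| ≤ cosh t ^ k)
    (hx : 0 < x) : Tendsto (fun t => exp (-x * cosh t) * g t) atTop (𝓝 0) := by
  have hdecay : Tendsto (fun t => k.factorial * (2 / x) ^ k * exp (-(x / 2) * t)) atTop (𝓝 0) := by
    simpa using (tendsto_exp_atBot.comp
      (tendsto_id.const_mul_atTop_of_neg (neg_neg_iff_pos.2 (half_pos hx)))).const_mul
      ((k.factorial : ℝ) * (2 / x) ^ k)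
  refine squeeze_zero_norm' ?_ hdecay
  filter_upwards [eventually_ge_atTop 0] with t ht
  rw [norm_mul, norm_of_nonneg (exp_pos _).le, norm_eq_abs, mul_comm]
  calc |g t| * exp (-x * cosh t) ≤ cosh t ^ k * exp (-x * cosh t) := by gcongr; exact hg_le t ht
    _ ≤ _ := cosh_pow_mul_exp_neg_mul_cosh_le hx ht k

lemma abs_sinh_le_cosh (t : ℝ) : |sinh t| ≤ cosh t := by
  rw [abs_sinh, ← cosh_abs]; exact (sinh_lt_cosh _).le

lemma besselK_zero_eq (x : ℝ) : besselK 0 x = ∫ t in Ioi 0, exp (-x * cosh t) := by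
  simp [besselK]

lemma besselK_one_eq (x : ℝ) : besselK 1 x = ∫ t in Ioi 0, exp (-x * cosh t) * cosh t := by
  simp [besselK]

lemma integrableOn_exp_neg_mul_cosh (hx : 0 < x) :
    IntegrableOn (fun t => exp (-x * cosh t)) (Ioi 0) := by
  simpa using integrableOn_exp_neg_mul_cosh_mul (g := fun _ => 1) (k := 0) continuous_const
    (by simp) hx

lemma integrableOn_exp_neg_mul_cosh_mul_cosh (hx : 0 < x) :
    IntegrableOn (fun t => exp (-x * cosh t) * cosh t) (Ioi 0) :=
  integrableOn_exp_neg_mul_cosh_mul (k := 1) continuous_cosh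
    (fun t _ => by rw [pow_one, abs_of_pos (cosh_pos t)]) hx

lemma integrableOn_exp_neg_mul_cosh_mul_exp_neg (hx : 0 < x) :
    IntegrableOn (fun t => exp (-x * cosh t) * exp (-t)) (Ioi 0) :=
  integrableOn_exp_neg_mul_cosh_mul (k := 0) (by fun_prop)
    (fun t ht => by rw [pow_zero, abs_of_pos (exp_pos _)]; exact exp_le_one_iff.2 (by linarith)) hx

lemma besselK_zero_pos (hx : 0 < x) : 0 < besselK 0 x := by
  rw [besselK_zero_eq]
  have : NeZero (volume.restrict (Ioi (0 : ℝ))) := ⟨by simp [Measure.restrict_eq_zero]⟩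
  exact integral_exp_pos (integrableOn_exp_neg_mul_cosh hx)

lemma hasDerivAt_besselK_zero (hx : 0 < x) : HasDerivAt (besselK 0) (-besselK 1 x) x := by
  convert hasDerivAt_integral_exp_neg_mul_cosh_mul (g := fun _ => 1) (k := 0)
    continuous_const (by simp) hx using 1
  · ext y; simp [besselK]
  · simp [besselK_one_eq]

lemma integral_exp_neg_mul_cosh_mul_cosh_sq (hx : 0 < x) :
    x * ∫ t in Ioi 0, exp (-x * cosh t) * (cosh t * cosh t) = x * besselK 0 x + besselK 1 x := by
  have hK : IntegrableOn (fun t => exp (-x * cosh t) * cosh t + x * exp (-x * cosh t)) (Ioi 0) :=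
    (integrableOn_exp_neg_mul_cosh_mul_cosh hx).add ((integrableOn_exp_neg_mul_cosh hx).const_mul x)
  have hsq : IntegrableOn (fun t => x * (exp (-x * cosh t) * (cosh t * cosh t))) (Ioi 0) :=
    (integrableOn_exp_neg_mul_cosh_mul (k := 2) (by fun_prop)
      (fun t _ => by rw [abs_of_pos (by positivity), sq]) hx).const_mul x
  have hparts := integral_Ioi_of_hasDerivAt_of_tendsto (a := 0) (m := 0)
    (f := fun t => exp (-x * cosh t) * sinh t)
    (f' := fun t => (exp (-x * cosh t) * cosh t + x * exp (-x * cosh t))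
      - x * (exp (-x * cosh t) * (cosh t * cosh t))) (by fun_prop) (fun t _ => ?_) (hK.sub hsq)
    (tendsto_exp_neg_mul_cosh_mul_atTop (k := 1)
      (fun t _ => by rw [pow_one]; exact abs_sinh_le_cosh t) hx)
  · rw [integral_sub hK hsq, integral_add (integrableOn_exp_neg_mul_cosh_mul_cosh hx)
        ((integrableOn_exp_neg_mul_cosh hx).const_mul x),
      integral_const_mul, integral_const_mul, ← besselK_zero_eq, ← besselK_one_eq] at hparts
    simp only [sinh_zero, mul_zero, sub_zero] at hparts
    linarith
  · refine (((hasDerivAt_cosh t).const_mul (-x)).exp.fun_mul (hasDerivAt_sinh t)).congr_deriv ?_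
    linear_combination (x * exp (-x * cosh t)) * cosh_sq_sub_sinh_sq t

lemma hasDerivAt_besselK_one (hx : 0 < x) :
    HasDerivAt (besselK 1) (-besselK 0 x - besselK 1 x / x) x := by
  have h := hasDerivAt_integral_exp_neg_mul_cosh_mul (k := 1) continuous_cosh
    (fun t _ => by rw [pow_one, abs_of_pos (cosh_pos t)]) hx
  have hsq := integral_exp_neg_mul_cosh_mul_cosh_sq hx
  convert h using 1
  · ext y; simp [besselK]
  · set I := ∫ t in Ioi 0, exp (-x * cosh t) * (cosh t * cosh t)
    field_simp
    linarith

lemma integral_exp_neg_mul_cosh_mul_sinh (hx : 0 < x) :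
    ∫ t in Ioi 0, exp (-x * cosh t) * sinh t = exp (-x) / x := by
  have h := integral_Ioi_of_hasDerivAt_of_nonneg (a := 0) (l := 0)
    (g := fun t => -exp (-x * cosh t) / x) (by fun_prop)
    (fun t _ => (((hasDerivAt_cosh t).const_mul (-x)).exp.neg.div_const x).congr_deriv
      (by field_simp))
    (fun t ht => mul_nonneg (exp_pos _).le (sinh_nonneg_iff.2 (le_of_lt ht)))
    (by simpa using ((tendsto_exp_neg_mul_cosh_mul_atTop (g := fun _ => 1) (k := 0) (by simp)
      hx).neg.div_const x))
  simpa [neg_div] using h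

lemma mul_besselK_one_eq (hx : 0 < x) :
    x * besselK 1 x = exp (-x) + x * ∫ t in Ioi 0, exp (-x * cosh t) * exp (-t) := by
  have hsinh : IntegrableOn (fun t => exp (-x * cosh t) * sinh t) (Ioi 0) :=
    integrableOn_exp_neg_mul_cosh_mul (k := 1) continuous_sinh
      (fun t _ => by rw [pow_one]; exact abs_sinh_le_cosh t) hx
  have hsplit : ∫ t in Ioi 0, exp (-x * cosh t) * cosh t
      = ∫ t in Ioi 0, (exp (-x * cosh t) * sinh t + exp (-x * cosh t) * exp (-t)) := by
    congr with t; rw [← cosh_sub_sinh]; ring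
  rw [besselK_one_eq, hsplit, integral_add hsinh (integrableOn_exp_neg_mul_cosh_mul_exp_neg hx),
    integral_exp_neg_mul_cosh_mul_sinh hx]
  field_simp

lemma exp_neg_le_mul_besselK_one (hx : 0 < x) : exp (-x) ≤ x * besselK 1 x := by
  rw [mul_besselK_one_eq hx, le_add_iff_nonneg_right]
  exact mul_nonneg hx.le (setIntegral_nonneg measurableSet_Ioi fun t _ => by positivity)

lemma mul_besselK_one_le (hx : 0 < x) : x * besselK 1 x ≤ (1 + x) * exp (-x) := by
  have h : ∫ t in Ioi 0, exp (-x * cosh t) * exp (-t) ≤ ∫ t in Ioi 0, exp (-x) * exp (-t) :=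
    setIntegral_mono_on (integrableOn_exp_neg_mul_cosh_mul_exp_neg hx)
      ((integrableOn_exp_neg_Ioi 0).const_mul _) measurableSet_Ioi fun t _ => by
        gcongr; nlinarith [one_le_cosh t]
  rw [integral_const_mul, integral_exp_neg_Ioi_zero, mul_one] at h
  rw [mul_besselK_one_eq hx]
  nlinarith

lemma besselK_zero_le_besselK_one (hx : 0 < x) : besselK 0 x ≤ besselK 1 x := by
  rw [besselK_zero_eq, besselK_one_eq]
  exact setIntegral_mono_on (integrableOn_exp_neg_mul_cosh hx)
    (integrableOn_exp_neg_mul_cosh_mul_cosh hx) measurableSet_Ioi fun t _ =>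
      le_mul_of_one_le_right (exp_pos _).le (one_le_cosh t)

lemma tendsto_mul_besselK_one_nhdsGT_zero :
    Tendsto (fun x => x * besselK 1 x) (𝓝[>] 0) (𝓝 1) := by
  have hcont : Continuous fun x : ℝ => exp (-x) := by fun_prop
  have hcont' : Continuous fun x : ℝ => (1 + x) * exp (-x) := by fun_prop
  refine tendsto_of_tendsto_of_tendsto_of_le_of_le' ?_ ?_
    (eventually_nhdsWithin_of_forall fun x hx => exp_neg_le_mul_besselK_one hx)
    (eventually_nhdsWithin_of_forall fun x hx => mul_besselK_one_le hx)
  · simpa using (hcont.tendsto 0).mono_left nhdsWithin_le_nhds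
  · simpa using (hcont'.tendsto 0).mono_left nhdsWithin_le_nhds

lemma tendsto_mul_besselK_one_atTop : Tendsto (fun x => x * besselK 1 x) atTop (𝓝 0) := by
  have hdecay : Tendsto (fun x : ℝ => (1 + x) * exp (-x)) atTop (𝓝 0) := by
    simpa [add_mul] using tendsto_exp_neg_atTop_nhds_zero.add
      (tendsto_pow_mul_exp_neg_atTop_nhds_zero 1)
  refine tendsto_of_tendsto_of_tendsto_of_le_of_le' tendsto_const_nhds hdecay ?_ ?_
  · filter_upwards [eventually_gt_atTop 0] with x hx
    exact (exp_pos _).le.trans (exp_neg_le_mul_besselK_one hx)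
  · filter_upwards [eventually_gt_atTop 0] with x hx
    exact mul_besselK_one_le hx

end BesselK

section BesselI

variable {x : ℝ}

lemma hasDerivAt_besselI (m : ℤ) (x : ℝ) :
    HasDerivAt (besselI m)
      ((1 / π) * ∫ θ in 0..π, exp (x * cos θ) * (cos θ * cos (m * θ))) x := by
  have key := intervalIntegral.hasDerivAt_integral_of_dominated_loc_of_deriv_le
    (μ := volume) (a := 0) (b := π)
    (F := fun y θ => exp (y * cos θ) * cos (m * θ))
    (F' := fun y θ => exp (y * cos θ) * (cos θ * cos (m * θ)))
    (bound := fun _ => exp (|x| + 1))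
    (Metric.ball_mem_nhds x one_pos)
    (.of_forall fun y => (by fun_prop : Continuous _).aestronglyMeasurable)
    ((by fun_prop : Continuous _).intervalIntegrable 0 π)
    (by fun_prop : Continuous _).aestronglyMeasurable ?_ intervalIntegrable_const
    (.of_forall fun θ _ y _ =>
      ((hasDerivAt_mul_const (cos θ)).exp.mul_const (cos (m * θ))).congr_deriv (by ring))
  · exact key.2.const_mul (1 / π)
  refine .of_forall fun θ _ y hy => ?_
  have hyx : |y| ≤ |x| + 1 := by
    have := abs_sub_abs_le_abs_sub y x
    rw [Metric.mem_ball, dist_eq] at hy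
    linarith
  rw [norm_mul, norm_of_nonneg (exp_pos _).le, norm_mul]
  calc exp (y * cos θ) * (‖cos θ‖ * ‖cos (m * θ)‖) ≤ exp (|x| + 1) * (1 * 1) := by
        gcongr
        · exact (le_abs_self _).trans (by
            rw [abs_mul]; nlinarith [abs_cos_le_one θ, abs_nonneg y, abs_nonneg (cos θ)])
        · exact abs_cos_le_one θ
        · exact abs_cos_le_one _
    _ = exp (|x| + 1) := by ring

lemma continuous_besselI (m : ℤ) : Continuous (besselI m) :=
  continuous_iff_continuousAt.2 fun x => (hasDerivAt_besselI m x).continuousAt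

lemma besselI_zero_eq (x : ℝ) : besselI 0 x = (1 / π) * ∫ θ in 0..π, exp (x * cos θ) := by
  simp [besselI]

lemma besselI_one_eq (x : ℝ) :
    besselI 1 x = (1 / π) * ∫ θ in 0..π, exp (x * cos θ) * cos θ := by
  simp [besselI]

lemma besselI_zero_zero : besselI 0 0 = 1 := by
  simp [besselI_zero_eq, pi_ne_zero]

lemma besselI_one_zero : besselI 1 0 = 0 := by
  simp [besselI_one_eq]

lemma hasDerivAt_besselI_zero (x : ℝ) : HasDerivAt (besselI 0) (besselI 1 x) x := by
  simpa [besselI_one_eq] using hasDerivAt_besselI 0 x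

lemma integral_exp_mul_cos_mul_cos_sq (x : ℝ) :
    x * ∫ θ in 0..π, exp (x * cos θ) * (cos θ * cos θ) = π * (x * besselI 0 x - besselI 1 x) := by
  have hint : ∀ f : ℝ → ℝ, Continuous f → IntervalIntegrable f volume 0 π :=
    fun f hf => hf.intervalIntegrable 0 π
  have hparts := intervalIntegral.integral_eq_sub_of_hasDerivAt
    (f := fun θ => exp (x * cos θ) * sin θ)
    (f' := fun θ => (exp (x * cos θ) * cos θ - x * exp (x * cos θ))
      + x * (exp (x * cos θ) * (cos θ * cos θ)))
    (fun θ _ => (((hasDerivAt_cos θ).const_mul x).exp.fun_mul (hasDerivAt_sin θ)).congr_deriv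
      (by linear_combination (-x * exp (x * cos θ)) * sin_sq_add_cos_sq θ))
    (hint _ (by fun_prop))
  rw [intervalIntegral.integral_add (hint _ (by fun_prop)) (hint _ (by fun_prop)),
    intervalIntegral.integral_sub (hint _ (by fun_prop)) (hint _ (by fun_prop)),
    intervalIntegral.integral_const_mul, intervalIntegral.integral_const_mul] at hparts
  simp only [sin_pi, sin_zero, mul_zero, sub_zero] at hparts
  rw [besselI_zero_eq, besselI_one_eq]
  generalize (∫ θ in 0..π, exp (x * cos θ)) = A at hparts ⊢
  generalize (∫ θ in 0..π, exp (x * cos θ) * cos θ) = B at hparts ⊢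
  generalize (∫ θ in 0..π, exp (x * cos θ) * (cos θ * cos θ)) = J at hparts ⊢
  field_simp
  linarith

lemma hasDerivAt_besselI_one (hx : x ≠ 0) :
    HasDerivAt (besselI 1) (besselI 0 x - besselI 1 x / x) x := by
  have h := hasDerivAt_besselI 1 x
  have hsq := integral_exp_mul_cos_mul_cos_sq x
  convert h using 1
  push_cast
  simp only [one_mul]
  generalize (∫ θ in 0..π, exp (x * cos θ) * (cos θ * cos θ)) = J at hsq ⊢
  field_simp
  linarith

end BesselI

section Wronskian

variable {x : ℝ}

lemma hasDerivAt_wronskian (hx : 0 < x) :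
    HasDerivAt (fun y => y * (besselI 0 y * besselK 1 y + besselI 1 y * besselK 0 y)) 0 x := by
  refine ((hasDerivAt_id x).fun_mul
    (((hasDerivAt_besselI_zero x).fun_mul (hasDerivAt_besselK_one hx)).fun_add
      ((hasDerivAt_besselI_one hx.ne').fun_mul (hasDerivAt_besselK_zero hx)))).congr_deriv ?_
  simp only [id]
  field_simp
  ring

lemma tendsto_wronskian_nhdsGT_zero :
    Tendsto (fun y => y * (besselI 0 y * besselK 1 y + besselI 1 y * besselK 0 y))
      (𝓝[>] 0) (𝓝 1) := by
  have hI : ∀ m : ℤ, Tendsto (besselI m) (𝓝[>] 0) (𝓝 (besselI m 0)) := fun m =>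
    ((continuous_besselI m).tendsto 0).mono_left nhdsWithin_le_nhds
  have hI0 := hI 0
  have hI1 := hI 1
  rw [besselI_zero_zero] at hI0
  rw [besselI_one_zero] at hI1
  -- `y K₀(y)` stays bounded because `K₀ ≤ K₁` and `y K₁(y) → 1`
  have hsmall : Tendsto (fun y => besselI 1 y * (y * besselK 0 y)) (𝓝[>] 0) (𝓝 0) := by
    refine squeeze_zero_norm' ?_ (by simpa using hI1.norm.mul tendsto_mul_besselK_one_nhdsGT_zero)
    filter_upwards [self_mem_nhdsWithin] with y hy
    rw [norm_mul, norm_of_nonneg (mul_pos hy (besselK_zero_pos hy)).le]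
    exact mul_le_mul_of_nonneg_left
      (mul_le_mul_of_nonneg_left (besselK_zero_le_besselK_one hy) hy.le) (norm_nonneg _)
  have h := (tendsto_mul_besselK_one_nhdsGT_zero.mul hI0).add hsmall
  rw [one_mul, add_zero] at h
  exact h.congr fun y => by ring

lemma wronskian_besselI_besselK (hx : 0 < x) :
    x * (besselI 0 x * besselK 1 x + besselI 1 x * besselK 0 x) = 1 := by
  set W := fun y => y * (besselI 0 y * besselK 1 y + besselI 1 y * besselK 0 y)
  have hconst : ∀ y ∈ Ioi 0, W y = W x := fun y hy =>
    isOpen_Ioi.is_const_of_deriv_eq_zero isPreconnected_Ioi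
      (fun z hz => (hasDerivAt_wronskian hz).differentiableAt.differentiableWithinAt)
      (fun z hz => (hasDerivAt_wronskian hz).deriv) hy hx
  refine tendsto_nhds_unique ?_ tendsto_wronskian_nhdsGT_zero
  exact tendsto_const_nhds.congr' (eventually_nhdsWithin_of_forall fun y hy => (hconst y hy).symm)

end Wronskian

section RadialIntegrals

variable {R κ r : ℝ}

lemma hasDerivAt_sq_mul_besselI_sq (hκr : κ * r ≠ 0) :
    HasDerivAt (fun s => s ^ 2 / 2 * (besselI 0 (κ * s) ^ 2 - besselI 1 (κ * s) ^ 2))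
      (r * besselI 0 (κ * r) ^ 2) r := by
  have h0 := (hasDerivAt_besselI_zero (κ * r)).comp r ((hasDerivAt_id' r).const_mul κ)
  have h1 := (hasDerivAt_besselI_one hκr).comp r ((hasDerivAt_id' r).const_mul κ)
  refine (((hasDerivAt_pow 2 r).div_const 2).fun_mul
    ((h0.fun_pow 2).fun_sub (h1.fun_pow 2))).congr_deriv ?_
  have hr : r ≠ 0 := right_ne_zero_of_mul hκr
  have hκ : κ ≠ 0 := left_ne_zero_of_mul hκr
  simp only [Function.comp_apply]
  field_simp
  ring

lemma hasDerivAt_sq_mul_besselK_sq (hκr : 0 < κ * r) :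
    HasDerivAt (fun s => s ^ 2 / 2 * (besselK 0 (κ * s) ^ 2 - besselK 1 (κ * s) ^ 2))
      (r * besselK 0 (κ * r) ^ 2) r := by
  have h0 := (hasDerivAt_besselK_zero hκr).comp r ((hasDerivAt_id' r).const_mul κ)
  have h1 := (hasDerivAt_besselK_one hκr).comp r ((hasDerivAt_id' r).const_mul κ)
  refine (((hasDerivAt_pow 2 r).div_const 2).fun_mul
    ((h0.fun_pow 2).fun_sub (h1.fun_pow 2))).congr_deriv ?_
  have hr : r ≠ 0 := right_ne_zero_of_mul hκr.ne'
  have hκ : κ ≠ 0 := left_ne_zero_of_mul hκr.ne'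
  simp only [Function.comp_apply]
  field_simp
  ring

lemma integral_mul_besselI_zero_sq (hR : 0 ≤ R) (hκ : κ ≠ 0) :
    ∫ r in 0..R, r * besselI 0 (κ * r) ^ 2
      = R ^ 2 / 2 * (besselI 0 (κ * R) ^ 2 - besselI 1 (κ * R) ^ 2) := by
  have hI0 := (continuous_besselI 0).comp (continuous_const_mul κ)
  have hI1 := (continuous_besselI 1).comp (continuous_const_mul κ)
  rw [intervalIntegral.integral_eq_sub_of_hasDerivAt_of_le hR (by fun_prop)
    (fun r hr => hasDerivAt_sq_mul_besselI_sq (mul_ne_zero hκ hr.1.ne'))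
    ((by fun_prop : Continuous fun r => r * besselI 0 (κ * r) ^ 2).intervalIntegrable 0 R)]
  simp

lemma tendsto_sq_mul_besselK_sq_sub_atTop (hκ : 0 < κ) :
    Tendsto (fun r => r ^ 2 / 2 * (besselK 0 (κ * r) ^ 2 - besselK 1 (κ * r) ^ 2)) atTop (𝓝 0) := by
  have hK1 : Tendsto (fun r => (κ * r * besselK 1 (κ * r)) ^ 2 / (2 * κ ^ 2)) atTop (𝓝 0) := by
    simpa using ((tendsto_mul_besselK_one_atTop.comp
      (tendsto_id.const_mul_atTop hκ)).pow 2).div_const (2 * κ ^ 2)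
  refine squeeze_zero_norm' ?_ hK1
  filter_upwards [eventually_gt_atTop 0] with r hr
  have hκr := mul_pos hκ hr
  have h0 := (besselK_zero_pos hκr).le
  have h01 := besselK_zero_le_besselK_one hκr
  rw [norm_mul, norm_of_nonneg (by positivity), norm_eq_abs,
    abs_sub_comm, abs_of_nonneg (by nlinarith)]
  field_simp
  nlinarith [sq_nonneg (besselK 0 (κ * r))]

lemma integrableOn_Ioi_mul_besselK_zero_sq (hR : 0 < R) (hκ : 0 < κ) :
    IntegrableOn (fun r => r * besselK 0 (κ * r) ^ 2) (Ioi R) :=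
  integrableOn_Ioi_deriv_of_nonneg
    (hasDerivAt_sq_mul_besselK_sq (mul_pos hκ hR)).continuousAt.continuousWithinAt
    (fun r hr => hasDerivAt_sq_mul_besselK_sq (mul_pos hκ (hR.trans hr)))
    (fun r hr => by have := hR.trans hr; positivity)
    (tendsto_sq_mul_besselK_sq_sub_atTop hκ)

lemma integral_Ioi_mul_besselK_zero_sq (hR : 0 < R) (hκ : 0 < κ) :
    ∫ r in Ioi R, r * besselK 0 (κ * r) ^ 2
      = R ^ 2 / 2 * (besselK 1 (κ * R) ^ 2 - besselK 0 (κ * R) ^ 2) := by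
  rw [integral_Ioi_of_hasDerivAt_of_nonneg
    (hasDerivAt_sq_mul_besselK_sq (mul_pos hκ hR)).continuousAt.continuousWithinAt
    (fun r hr => hasDerivAt_sq_mul_besselK_sq (mul_pos hκ (hR.trans hr)))
    (fun r hr => by have := hR.trans hr; positivity)
    (tendsto_sq_mul_besselK_sq_sub_atTop hκ)]
  ring

end RadialIntegrals

section PolarCoordinates

lemma integral_fun_norm_euclideanSpace_fin_two (f : ℝ → ℝ) :
    ∫ x : EuclideanSpace ℝ (Fin 2), f ‖x‖ = 2 * π * ∫ r in Ioi 0, r * f r := by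
  rw [integral_fun_norm_addHaar volume f]
  simp [finrank_euclideanSpace, measureReal_def, pi_nonneg, mul_assoc]

lemma integral_ite_norm_lt_euclideanSpace_fin_two {R : ℝ} (hR : 0 < R) {f g : ℝ → ℝ}
    (hf : IntervalIntegrable (fun r => r * f r) volume 0 R)
    (hg : IntegrableOn (fun r => r * g r) (Ioi R)) :
    ∫ x : EuclideanSpace ℝ (Fin 2), (if ‖x‖ < R then f ‖x‖ else g ‖x‖)
      = 2 * π * ((∫ r in 0..R, r * f r) + ∫ r in Ioi R, r * g r) := by
  have hIoo : EqOn (fun r => r * if r < R then f r else g r) (fun r => r * f r) (Ioo 0 R) :=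
    fun r hr => by simp [hr.2]
  have hIci : EqOn (fun r => r * if r < R then f r else g r) (fun r => r * g r) (Ici R) :=
    fun r hr => by simp [not_lt.2 (mem_Ici.1 hr)]
  rw [integral_fun_norm_euclideanSpace_fin_two (fun r => if r < R then f r else g r),
    ← Ioo_union_Ici_eq_Ioi hR,
    setIntegral_union ((Iio_disjoint_Ici le_rfl).mono_left Ioo_subset_Iio_self) measurableSet_Ici
      ((hf.1.mono_set Ioo_subset_Ioc_self).congr_fun hIoo.symm measurableSet_Ioo)
      (((integrableOn_Ici_iff_integrableOn_Ioi).2 hg).congr_fun hIci.symm measurableSet_Ici),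
    setIntegral_congr_fun measurableSet_Ioo hIoo, setIntegral_congr_fun measurableSet_Ici hIci,
    integral_Ici_eq_integral_Ioi, intervalIntegral.integral_of_le hR.le,
    integral_Ioc_eq_integral_Ioo]

end PolarCoordinates

section GroundState

variable {R κ : ℝ}

lemma integral_mul_besselI_sq_add_integral_mul_besselK_sq (hR : 0 < R) (hκ : 0 < κ) :
    (∫ r in 0..R, r * besselI 0 (κ * r) ^ 2) +
      (besselI 0 (κ * R) / besselK 0 (κ * R)) ^ 2 * ∫ r in Ioi R, r * besselK 0 (κ * r) ^ 2
      = -(R / (2 * κ * besselK 0 (κ * R) ^ 2)) *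
          deriv (fun x => besselI 0 x * besselK 0 x) (κ * R) := by
  have hκR := mul_pos hκ hR
  have hK0 := (besselK_zero_pos hκR).ne'
  have hW := wronskian_besselI_besselK hκR
  rw [integral_mul_besselI_zero_sq hR.le hκ.ne', integral_Ioi_mul_besselK_zero_sq hR hκ,
    ((hasDerivAt_besselI_zero _).fun_mul (hasDerivAt_besselK_zero hκR)).deriv]
  generalize besselI 0 (κ * R) = i0 at hW ⊢
  generalize besselI 1 (κ * R) = i1 at hW ⊢
  generalize besselK 1 (κ * R) = k1 at hW ⊢
  generalize besselK 0 (κ * R) = k0 at hW hK0 ⊢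
  field_simp
  linear_combination (i0 * k1 - i1 * k0) * hW

lemma integral_sq_ite_besselI_besselK_euclideanSpace_fin_two (hR : 0 < R) (hκ : 0 < κ) (c : ℝ) :
    ∫ x : EuclideanSpace ℝ (Fin 2),
        (if ‖x‖ < R then besselI 0 (κ * ‖x‖) / √(2 * π) else c * besselK 0 (κ * ‖x‖) / √(2 * π)) ^ 2
      = (∫ r in 0..R, r * besselI 0 (κ * r) ^ 2) +
          c ^ 2 * ∫ r in Ioi R, r * besselK 0 (κ * r) ^ 2 := by
  have hI0 := (continuous_besselI 0).comp (continuous_const_mul κ)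
  have h := integral_ite_norm_lt_euclideanSpace_fin_two hR
    (f := fun r => (besselI 0 (κ * r) / √(2 * π)) ^ 2)
    (g := fun r => (c * besselK 0 (κ * r) / √(2 * π)) ^ 2)
    ((by fun_prop : Continuous fun r => r * (besselI 0 (κ * r) / √(2 * π)) ^ 2).intervalIntegrable
      0 R)
    (IntegrableOn.congr_fun ((integrableOn_Ioi_mul_besselK_zero_sq hR hκ).const_mul
      (c ^ 2 / √(2 * π) ^ 2)) (fun r _ => by ring) measurableSet_Ioi)
  simp only [ite_pow] at h ⊢
  have h2π : √(2 * π) ^ 2 = 2 * π := sq_sqrt (by positivity)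
  rw [h]
  simp only [div_pow, mul_pow, h2π, ← mul_div_assoc, intervalIntegral.integral_div, integral_div,
    mul_left_comm _ (c ^ 2), integral_const_mul]
  rw [← add_div]
  exact mul_div_cancel₀ _ (by positivity)

end GroundState

/-- squared norm of the single-circle ground-state eigenfunction. -/
theorem ground_state_norm (R κ : ℝ) (hR : 0 < R) (hκ : 0 < κ) :
    ((∫ r in (0:ℝ)..R, r * (besselI 0 (κ * r))^2) +
      (besselI 0 (κ * R) / besselK 0 (κ * R))^2 *
        ∫ r in Set.Ioi R, r * (besselK 0 (κ * r))^2
      = -(R / (2 * κ * (besselK 0 (κ * R))^2)) *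
          deriv (fun x => besselI 0 x * besselK 0 x) (κ * R)) ∧
    (∫ x : EuclideanSpace ℝ (Fin 2),
        (if ‖x‖ < R then besselI 0 (κ * ‖x‖) / Real.sqrt (2 * Real.pi)
          else (besselI 0 (κ * R) / besselK 0 (κ * R)) * besselK 0 (κ * ‖x‖) /
            Real.sqrt (2 * Real.pi))^2
      = -(R / (2 * κ * (besselK 0 (κ * R))^2)) *
          deriv (fun x => besselI 0 x * besselK 0 x) (κ * R)) := by
  have h := integral_mul_besselI_sq_add_integral_mul_besselK_sq hR hκ
  exact ⟨h, (integral_sq_ite_besselI_besselK_euclideanSpace_fin_two hR hκ _).trans h⟩
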